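/- arXiv:math/9801031 — 2 statements merged into one kernel-verified Lean document; each statement's English description precedes it below -/
import Mathlib

section
/- The explicit SL_q(N) braid matrix R̂ on ℂ^N ⊗ ℂ^N, defined by R̂ = q·Σ_i e^i_i⊗e^i_i + Σ_{i≠j} e^j_i⊗e^i_j + (q−q⁻¹)·Σ_{i<j} e^i_i⊗e^j_j (where e^i_j is the elementary matrix), satisfies the braid equation R̂₁₂ R̂₂₃ R̂₁₂ = R̂₂₃ R̂₁₂ R̂₂₃, where R̂₁₂ = R̂⊗1 and R̂₂₃ = 1⊗R̂ as operators on ℂ^N ⊗ ℂ^N ⊗ ℂ^N. -/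
/-- The explicit `SL_q(N)` braid matrix `R̂` on `ℂ^N ⊗ ℂ^N`, with row index `(i,j)`
and column index `(k,l)`: entry `q` if `i=j=k=l`, `1` if `i≠j, k=j, l=i`,
`q - q⁻¹` if `i<j, k=i, l=j`, and `0` otherwise. -/
noncomputable def Rhat (K : Type*) [Field K] (N : ℕ) (q : K) :
    Matrix (Fin N × Fin N) (Fin N × Fin N) K := fun p r =>
  (if p.1 = p.2 ∧ r.1 = p.1 ∧ r.2 = p.1 then q else 0) +
  (if p.1 ≠ p.2 ∧ r.1 = p.2 ∧ r.2 = p.1 then 1 else 0) +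
  (if p.1 < p.2 ∧ r.1 = p.1 ∧ r.2 = p.2 then q - q⁻¹ else 0)

/-- `M₁₂ = M ⊗ 1` as an operator (matrix) on `K^N ⊗ K^N ⊗ K^N`. -/
def M12 {K : Type*} [Field K] {N : ℕ}
    (M : Matrix (Fin N × Fin N) (Fin N × Fin N) K) :
    Matrix (Fin N × Fin N × Fin N) (Fin N × Fin N × Fin N) K :=
  fun p r => M (p.1, p.2.1) (r.1, r.2.1) * (if p.2.2 = r.2.2 then 1 else 0)

/-- `M₂₃ = 1 ⊗ M` as an operator (matrix) on `K^N ⊗ K^N ⊗ K^N`. -/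
def M23 {K : Type*} [Field K] {N : ℕ}
    (M : Matrix (Fin N × Fin N) (Fin N × Fin N) K) :
    Matrix (Fin N × Fin N × Fin N) (Fin N × Fin N × Fin N) K :=
  fun p r => (if p.1 = r.1 then (1 : K) else 0) * M p.2 r.2

/-! Left multiplication by `R̂₁₂` or `R̂₂₃` acts on rows as the Hecke algebra acts on words of
length three: row `(a, b, c)` of `R̂₁₂ X` is `q X(a,a,c)` if `a = b`, and
`X(b,a,c) + [a < b] (q - q⁻¹) X(a,b,c)` otherwise. Hence row `(a, b, c)` of either side of the
braid equation is a combination of the basis rows at the permutations of `(a, b, c)`, with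
coefficients depending only on the relative order of `a, b, c`. In each of the thirteen order
types the coefficients agree, by `q q⁻¹ = 1`. -/

section RhatRows

variable {K : Type*} [Field K] {N : ℕ} (q : K)

theorem sum_Rhat_mul (a b : Fin N) (g : Fin N → Fin N → K) :
    ∑ x, ∑ y, Rhat K N q (a, b) (x, y) * g x y =
      if a = b then q * g a a else (if a < b then (q - q⁻¹) * g a b else 0) + g b a := by
  rcases eq_or_ne a b with rfl | hab
  · simp [Rhat, ite_and]
  · simp [Rhat, hab, ite_and, add_mul, Finset.sum_add_distrib, add_comm]

variable {ι : Type*} (X : Matrix (Fin N × Fin N × Fin N) ι K)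

theorem M12_Rhat_mul_apply (a b c : Fin N) :
    (M12 (Rhat K N q) * X) (a, b, c) =
      if a = b then q • X (a, a, c)
      else (if a < b then (q - q⁻¹) • X (a, b, c) else 0) + X (b, a, c) := by
  ext j
  simp only [Matrix.mul_apply, M12, Fintype.sum_prod_type, mul_ite, mul_one, mul_zero, ite_mul,
    zero_mul, Finset.sum_ite_eq, Finset.mem_univ, if_true]
  rw [sum_Rhat_mul]
  split_ifs <;> simp

theorem M23_Rhat_mul_apply (a b c : Fin N) :
    (M23 (Rhat K N q) * X) (a, b, c) =
      if b = c then q • X (a, b, b)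
      else (if b < c then (q - q⁻¹) • X (a, b, c) else 0) + X (a, c, b) := by
  ext j
  simp only [Matrix.mul_apply, M23, Fintype.sum_prod_type, ite_mul, one_mul, zero_mul,
    Finset.sum_ite_irrel, Finset.sum_const_zero, Finset.sum_ite_eq, Finset.mem_univ, if_true]
  rw [sum_Rhat_mul]
  split_ifs <;> simp

end RhatRows

theorem Rhat_braid_general (K : Type*) [Field K] (N : ℕ) (q : K) (hq : q ≠ 0) :
    M12 (Rhat K N q) * M23 (Rhat K N q) * M12 (Rhat K N q) =
      M23 (Rhat K N q) * M12 (Rhat K N q) * M23 (Rhat K N q) := by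
  funext ⟨a, b, c⟩
  rw [← Matrix.mul_one (M12 (Rhat K N q) * _ * _), ← Matrix.mul_one (M23 (Rhat K N q) * _ * _)]
  simp only [Matrix.mul_assoc, M12_Rhat_mul_apply, M23_Rhat_mul_apply]
  rcases lt_trichotomy a b with hab | hab | hab <;>
    rcases lt_trichotomy b c with hbc | hbc | hbc <;>
      rcases lt_trichotomy a c with hac | hac | hac <;>
        try omega
  all_goals
    subst_vars
    simp (disch := omega) only [if_pos, if_neg, if_true]
  all_goals match_scalars <;> field_simp <;> ring

/-- The explicit `SL_q(N)` braid matrix satisfies the braid equation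
`R̂₁₂ R̂₂₃ R̂₁₂ = R̂₂₃ R̂₁₂ R̂₂₃`. -/
theorem Rhat_braid (K : Type*) [Field K] (N : ℕ) (hN : 1 ≤ N) (q : K) (hq : q ≠ 0) :
    M12 (Rhat K N q) * M23 (Rhat K N q) * M12 (Rhat K N q) =
      M23 (Rhat K N q) * M12 (Rhat K N q) * M23 (Rhat K N q) :=
  Rhat_braid_general K N q hq
end

section
/- Let R̂ be the explicit SL_q(2) braid matrix with q generic (q ∈ ℂ, q ≠ 0, q⁴ ≠ 1). If a 4×4 matrix W satisfies R̂₁₂·W₂₃·R̂₁₂ = R̂₂₃·W₁₂·R̂₂₃, then W is a scalar multiple of R̂. -/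
section TripleProduct

variable {K : Type*} [Field K] {N : ℕ}

theorem M12_mul_M23_mul_M12_apply (A B C : Matrix (Fin N × Fin N) (Fin N × Fin N) K)
    (i j k i' j' k' : Fin N) :
    (M12 A * M23 B * M12 C) (i, j, k) (i', j', k') =
      ∑ a, ∑ c, ∑ b, A (i, j) (a, b) * B (b, k) (c, k') * C (a, c) (i', j') := by
  simp [Matrix.mul_apply, M12, M23, Fintype.sum_prod_type, Finset.sum_mul, mul_assoc]

theorem M23_mul_M12_mul_M23_apply (A B C : Matrix (Fin N × Fin N) (Fin N × Fin N) K)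
    (i j k i' j' k' : Fin N) :
    (M23 A * M12 B * M23 C) (i, j, k) (i', j', k') =
      ∑ d, ∑ c, ∑ b, A (j, k) (b, c) * B (i, b) (i', d) * C (d, c) (j', k') := by
  simp [Matrix.mul_apply, M12, M23, Fintype.sum_prod_type, Finset.sum_mul, mul_assoc]

def BraidConsistent (R W : Matrix (Fin N × Fin N) (Fin N × Fin N) K) : Prop :=
  M12 R * M23 W * M12 R = M23 R * M12 W * M23 R

theorem BraidConsistent.apply {R W : Matrix (Fin N × Fin N) (Fin N × Fin N) K}
    (h : BraidConsistent R W) (i j k i' j' k' : Fin N) :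
    ∑ a, ∑ c, ∑ b, R (i, j) (a, b) * W (b, k) (c, k') * R (a, c) (i', j') =
      ∑ d, ∑ c, ∑ b, R (j, k) (b, c) * W (i, b) (i', d) * R (d, c) (j', k') := by
  rw [← M12_mul_M23_mul_M12_apply, ← M23_mul_M12_mul_M23_apply, h]

end TripleProduct

section SL2

variable {K : Type*} [Field K] {q : K} {W : Matrix (Fin 2 × Fin 2) (Fin 2 × Fin 2) K}

theorem sub_inv_ne_zero_of_sq_ne_one (hq : q ≠ 0) (hq2 : q ^ 2 ≠ 1) : q - q⁻¹ ≠ 0 := by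
  rw [sub_ne_zero]
  intro h
  exact hq2 (by rw [sq]; nth_rw 2 [h]; exact mul_inv_cancel₀ hq)

theorem BraidConsistent.Rhat_two_apply (hq : q ≠ 0) (hq2 : q ^ 2 ≠ 1)
    (h : BraidConsistent (Rhat K 2 q) W) (p r : Fin 2 × Fin 2) :
    W p r = q⁻¹ * W (0, 0) (0, 0) * Rhat K 2 q p r := by
  have hq1 : q ≠ 1 := by rintro rfl; simp at hq2
  have hε := sub_inv_ne_zero_of_sq_ne_one hq hq2
  have h0001 : W (0, 0) (0, 1) = 0 := by
    simpa [Fin.sum_univ_two, Rhat, mul_assoc, hq, hq1, mul_right_eq_self₀] using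
      h.apply 0 0 0 0 0 1
  have h0100 : W (0, 1) (0, 0) = 0 := by
    simpa [Fin.sum_univ_two, Rhat, hq, hq1, mul_left_eq_self₀] using h.apply 0 0 1 0 0 0
  have h0101 : W (0, 1) (0, 1) = q⁻¹ * W (0, 0) (0, 0) * (q - q⁻¹) := by
    have e := h.apply 0 0 1 0 0 1
    simp [Fin.sum_univ_two, Rhat] at e
    grind
  rcases p with ⟨j, k⟩
  rcases r with ⟨j', k'⟩
  have e := h.apply 0 j k 0 j' k'
  fin_cases j <;> fin_cases k <;> fin_cases j' <;> fin_cases k' <;>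
    simp [Fin.sum_univ_two, Rhat, hq, hε, h0001, h0100, h0101] at e ⊢ <;>
    grind

theorem BraidConsistent.eq_smul_Rhat_two (hq : q ≠ 0) (hq2 : q ^ 2 ≠ 1)
    (h : BraidConsistent (Rhat K 2 q) W) : W = (q⁻¹ * W (0, 0) (0, 0)) • Rhat K 2 q := by
  ext p r
  rw [Matrix.smul_apply, smul_eq_mul]
  exact h.Rhat_two_apply hq hq2 p r

end SL2

/-- For the explicit `SL_q(2)` braid matrix with generic `q` (`q ≠ 0`, `q⁴ ≠ 1`),
any `4×4` matrix `W` satisfying `R̂₁₂·W₂₃·R̂₁₂ = R̂₂₃·W₁₂·R̂₂₃` is a scalar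
multiple of `R̂`. -/
theorem consistency_unique_sl2 (q : ℂ) (hq : q ≠ 0) (hq4 : q ^ 4 ≠ 1)
    (W : Matrix (Fin 2 × Fin 2) (Fin 2 × Fin 2) ℂ)
    (hW : M12 (Rhat ℂ 2 q) * M23 W * M12 (Rhat ℂ 2 q) =
      M23 (Rhat ℂ 2 q) * M12 W * M23 (Rhat ℂ 2 q)) :
    ∃ c : ℂ, W = c • Rhat ℂ 2 q := by
  have hq2 : q ^ 2 ≠ 1 := fun h => hq4 (by rw [show q ^ 4 = (q ^ 2) ^ 2 by ring, h, one_pow])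
  exact ⟨_, BraidConsistent.eq_smul_Rhat_two hq hq2 hW⟩
end
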